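/- arXiv:2402.15890 — 8 statements merged into one kernel-verified Lean document; each statement's English description precedes it below -/
import Mathlib

section
/- If f is an FGN contract with Σ_{i∈S} f_i(S) ≤ 1 for all S, and p satisfies the equilibrium condition p_i·c_i'(p_i) = Σ_{S∋i} f_i(S)·P_p(S) for all i, then Σ_i p_i·c_i'(p_i) + Π_i(1−p_i) ≤ 1. -/
/-
Summing the equilibrium condition over the agents and exchanging the sums turns the left-hand
side into `∑_S (∑_{i ∈ S} f_i(S)) P_p(S) + P_p(∅)`. The empty coalition pays nothing, every
other one pays at most `1`, and the probabilities `P_p(S)` sum to `1`.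
-/

open Finset

/-- Probability that exactly the agents in `S` succeed. -/
noncomputable def Pp {n : ℕ} (p : Fin n → ℝ) (S : Finset (Fin n)) : ℝ :=
  (∏ j ∈ S, p j) * ∏ j ∈ Sᶜ, (1 - p j)

theorem Pp_nonneg {n : ℕ} {p : Fin n → ℝ} (hp : ∀ i, p i ∈ Set.Icc (0:ℝ) 1)
    (S : Finset (Fin n)) : 0 ≤ Pp p S :=
  mul_nonneg (prod_nonneg fun j _ => (hp j).1) (prod_nonneg fun j _ => sub_nonneg.2 (hp j).2)

theorem Pp_empty {n : ℕ} (p : Fin n → ℝ) : Pp p ∅ = ∏ i, (1 - p i) := by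
  simp [Pp]

theorem sum_powerset_Pp {n : ℕ} (p : Fin n → ℝ) :
    ∑ S ∈ (univ : Finset (Fin n)).powerset, Pp p S = 1 := by
  calc ∑ S ∈ (univ : Finset (Fin n)).powerset, Pp p S
      = ∑ S ∈ (univ : Finset (Fin n)).powerset,
          (∏ j ∈ S, p j) * ∏ j ∈ univ \ S, (1 - p j) := by
        simp only [Pp, compl_eq_univ_sdiff]
    _ = ∏ j, (p j + (1 - p j)) := (prod_add p (fun j => 1 - p j) univ).symm
    _ = 1 := by simp

theorem sum_sum_filter_mem_eq_sum_powerset {α M : Type*} [Fintype α] [DecidableEq α]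
    [AddCommMonoid M] (g : α → Finset α → M) :
    ∑ i, ∑ S ∈ univ.powerset.filter (fun S => i ∈ S), g i S
      = ∑ S ∈ (univ : Finset α).powerset, ∑ i ∈ S, g i S := by
  simp_rw [sum_filter]
  rw [sum_comm]
  refine sum_congr rfl fun S _ => ?_
  rw [sum_ite_mem, univ_inter]

theorem sum_mul_add_le_one {ι : Type*} [DecidableEq ι] {s : Finset ι} {a w : ι → ℝ}
    {i₀ : ι} (hi₀ : i₀ ∈ s) (hw : ∀ i ∈ s, 0 ≤ w i) (hw_sum : ∑ i ∈ s, w i = 1)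
    (ha : ∀ i ∈ s, a i ≤ 1) (ha₀ : a i₀ = 0) :
    ∑ i ∈ s, a i * w i + w i₀ ≤ 1 := by
  rw [← add_sum_erase s _ hi₀, ha₀, zero_mul, zero_add, ← hw_sum,
    ← sum_erase_add s _ hi₀]
  gcongr with i hi
  exact mul_le_of_le_one_left (hw i (mem_of_mem_erase hi)) (ha i (mem_of_mem_erase hi))

theorem stmt3_general (n : ℕ) (c : Fin n → ℝ → ℝ) (f : Fin n → Finset (Fin n) → ℝ)
    (p : Fin n → ℝ)
    (hbudget : ∀ S : Finset (Fin n), ∑ i ∈ S, f i S ≤ 1)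
    (hp : ∀ i, p i ∈ Set.Icc (0:ℝ) 1)
    (heq : ∀ i, p i * deriv (c i) (p i)
      = ∑ S ∈ Finset.univ.powerset.filter (fun S => i ∈ S), f i S * Pp p S) :
    (∑ i, p i * deriv (c i) (p i)) + ∏ i, (1 - p i) ≤ 1 := by
  have hswap : ∑ i, p i * deriv (c i) (p i)
      = ∑ S ∈ (univ : Finset (Fin n)).powerset, (∑ i ∈ S, f i S) * Pp p S := by
    simp_rw [heq, sum_sum_filter_mem_eq_sum_powerset, sum_mul]
  rw [hswap, ← Pp_empty]
  exact sum_mul_add_le_one (empty_mem_powerset _) (fun S _ => Pp_nonneg hp S)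
    (sum_powerset_Pp p) (fun S _ => hbudget S) sum_empty

theorem stmt3 (n : ℕ) (c : Fin n → ℝ → ℝ) (f : Fin n → Finset (Fin n) → ℝ)
    (p : Fin n → ℝ)
    (hFGN : ∀ i S, i ∉ S → f i S = 0)
    (hf01 : ∀ i S, f i S ∈ Set.Icc (0:ℝ) 1)
    (hbudget : ∀ S : Finset (Fin n), ∑ i ∈ S, f i S ≤ 1)
    (hp : ∀ i, p i ∈ Set.Icc (0:ℝ) 1)
    (heq : ∀ i, p i * deriv (c i) (p i)
      = ∑ S ∈ Finset.univ.powerset.filter (fun S => i ∈ S), f i S * Pp p S) :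
    (∑ i, p i * deriv (c i) (p i)) + ∏ i, (1 - p i) ≤ 1 :=
  stmt3_general n c f p hbudget hp heq
end

section
/- If f is a successful-get-everything contract (FGN and Σ_{i∈S} f_i(S) = 1 for all nonempty S) and p satisfies the equilibrium conditions p_i·c_i'(p_i) = Σ_{S∋i} f_i(S)·P_p(S) for all i, then Σ_i p_i·c_i'(p_i) + Π_i(1−p_i) = 1. -/
open Finset

lemma sum_Pp {n : ℕ} (p : Fin n → ℝ) : ∑ S ∈ Finset.univ.powerset, Pp p S = 1 := by
  have h := Finset.prod_add (fun i => p i) (fun i => 1 - p i) (Finset.univ : Finset (Fin n))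
  rw [show (1:ℝ) = ∏ i : Fin n, (p i + (1 - p i)) by simp, h]
  apply Finset.sum_congr rfl
  intro S hS
  unfold Pp
  congr 1

theorem stmt4 (n : ℕ) (c : Fin n → ℝ → ℝ) (f : Fin n → Finset (Fin n) → ℝ)
    (p : Fin n → ℝ)
    (hFGN : ∀ i S, i ∉ S → f i S = 0)
    (hf01 : ∀ i S, f i S ∈ Set.Icc (0:ℝ) 1)
    (hSGE : ∀ S : Finset (Fin n), S ≠ ∅ → ∑ i ∈ S, f i S = 1)
    (hp : ∀ i, p i ∈ Set.Icc (0:ℝ) 1)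
    (heq : ∀ i, p i * deriv (c i) (p i)
      = ∑ S ∈ Finset.univ.powerset.filter (fun S => i ∈ S), f i S * Pp p S) :
    (∑ i, p i * deriv (c i) (p i)) + ∏ i, (1 - p i) = 1 := by
  have key : (∑ i, p i * deriv (c i) (p i))
      = ∑ S ∈ Finset.univ.powerset, (if S = ∅ then 0 else Pp p S) := by
    calc ∑ i, p i * deriv (c i) (p i)
        = ∑ i, ∑ S ∈ Finset.univ.powerset, (if i ∈ S then f i S * Pp p S else 0) := by
          refine Finset.sum_congr rfl fun i _ => ?_
          rw [heq i, Finset.sum_filter]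
      _ = ∑ S ∈ Finset.univ.powerset, ∑ i, (if i ∈ S then f i S * Pp p S else 0) :=
          Finset.sum_comm
      _ = ∑ S ∈ Finset.univ.powerset, (if S = ∅ then 0 else Pp p S) := by
          refine Finset.sum_congr rfl fun S _ => ?_
          rw [Finset.sum_ite_mem, Finset.univ_inter]
          by_cases hS : S = ∅
          · simp [hS]
          · rw [if_neg hS, ← Finset.sum_mul, hSGE S hS, one_mul]
  have hPp0 : Pp p ∅ = ∏ i, (1 - p i) := by simp [Pp]
  have := sum_Pp p
  rw [key]
  rw [← Finset.add_sum_erase _ (fun S => if S = ∅ then 0 else Pp p S)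
    (Finset.empty_mem_powerset _), if_pos rfl, zero_add]
  rw [← Finset.add_sum_erase _ (Pp p) (Finset.empty_mem_powerset _)] at this
  have hrest : ∑ S ∈ ((Finset.univ.powerset).erase ∅), (if S = ∅ then 0 else Pp p S)
      = ∑ S ∈ ((Finset.univ.powerset).erase ∅), Pp p S := by
    refine Finset.sum_congr rfl fun S hS => ?_
    rw [if_neg (Finset.mem_erase.mp hS).1]
  rw [hrest, ← hPp0]
  linarith
end

section
/- If f is an SGE contract and p ∈ (0,1)^n satisfies the first-order conditions c_i'(p_i) = E_p[f_i(S) | i ∈ S] for all i (with c_i twice differentiable, strictly convex, c_i'(0)=0), then there is no q ∈ [0,1)^n with q ≥ p, q ≠ p, such that q is an equilibrium of some contract g (i.e., satisfying Σ_i q_i·c_i'(q_i) + Π_i(1−q_i) ≤ 1). In other words, equilibria of SGE contracts are maximal. -/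
open Finset

/-- Expected reward of agent `i` conditional on `i` succeeding:
`E_p[f(S) | i ∈ S] = ∑_{T ⊆ [n]\{i}} f(T ∪ {i}) ∏_{j∈T} p j ∏_{j∉T, j≠i} (1 - p j)`. -/
noncomputable def EIn {n : ℕ} (p : Fin n → ℝ) (f : Finset (Fin n) → ℝ) (i : Fin n) : ℝ :=
  ∑ T ∈ (Finset.univ.erase i).powerset,
    f (insert i T) * ((∏ j ∈ T, p j) * ∏ j ∈ (Finset.univ.erase i) \ T, (1 - p j))

/-- weight of a success set -/
noncomputable def wgt {n : ℕ} (p : Fin n → ℝ) (S : Finset (Fin n)) : ℝ :=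
  (∏ j ∈ S, p j) * ∏ j ∈ Finset.univ \ S, (1 - p j)

lemma sum_wgt {n : ℕ} (p : Fin n → ℝ) :
    ∑ S ∈ (Finset.univ : Finset (Fin n)).powerset, wgt p S = 1 := by
  have h := Finset.prod_add p (fun j => 1 - p j) (Finset.univ : Finset (Fin n))
  simp only [add_sub_cancel, Finset.prod_const_one] at h
  simpa [wgt] using h.symm

lemma pmul_EIn {n : ℕ} (p : Fin n → ℝ) (f : Fin n → Finset (Fin n) → ℝ)
    (hFGN : ∀ i S, i ∉ S → f i S = 0) (i : Fin n) :
    p i * EIn p (f i) i = ∑ S ∈ (Finset.univ : Finset (Fin n)).powerset, f i S * wgt p S := by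
  have hi : i ∉ (Finset.univ : Finset (Fin n)).erase i := Finset.notMem_erase i _
  have huniv : (Finset.univ : Finset (Fin n)) = insert i (Finset.univ.erase i) :=
    (Finset.insert_erase (Finset.mem_univ i)).symm
  rw [show ((Finset.univ : Finset (Fin n)).powerset)
      = ((insert i (Finset.univ.erase i)).powerset) by rw [← huniv]]
  rw [Finset.sum_powerset_insert hi]
  have h1 : ∑ T ∈ (Finset.univ.erase i).powerset, f i T * wgt p T = 0 := by
    apply Finset.sum_eq_zero
    intro T hT
    have : i ∉ T := fun h => hi (Finset.mem_powerset.mp hT h)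
    rw [hFGN i T this, zero_mul]
  rw [h1, zero_add, EIn, Finset.mul_sum]
  apply Finset.sum_congr rfl
  intro T hT
  have hiT : i ∉ T := fun h => hi (Finset.mem_powerset.mp hT h)
  have hsd : (Finset.univ : Finset (Fin n)) \ insert i T = (Finset.univ.erase i) \ T := by
    ext j
    simp only [Finset.mem_sdiff, Finset.mem_univ, Finset.mem_insert, Finset.mem_erase,
      true_and, not_or]
    tauto
  rw [wgt, Finset.prod_insert hiT, hsd]
  ring

lemma prod_sub_le {n : ℕ} (p q : Fin n → ℝ) (h0 : ∀ i, 0 ≤ p i)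
    (hpq : ∀ i, p i ≤ q i) (hq1 : ∀ i, q i ≤ 1) (s : Finset (Fin n)) :
    ∏ j ∈ s, (1 - p j) - ∏ j ∈ s, (1 - q j) ≤
      ∑ i ∈ s, (q i - p i) * ∏ j ∈ s.erase i, (1 - p j) := by
  induction s using Finset.induction with
  | empty => simp
  | @insert a s ha ih =>
    have hP0 : (0:ℝ) ≤ ∏ j ∈ s, (1 - p j) :=
      Finset.prod_nonneg fun j _ => by have := hpq j; have := hq1 j; linarith
    have hQ0 : (0:ℝ) ≤ ∏ j ∈ s, (1 - q j) :=
      Finset.prod_nonneg fun j _ => by have := hq1 j; linarith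
    have hQP : ∏ j ∈ s, (1 - q j) ≤ ∏ j ∈ s, (1 - p j) := by
      apply Finset.prod_le_prod
      · intro j _; have := hq1 j; linarith
      · intro j _; have := hpq j; linarith
    rw [Finset.prod_insert ha, Finset.prod_insert ha, Finset.sum_insert ha,
      Finset.erase_insert ha]
    have hrw : ∀ i ∈ s, (q i - p i) * ∏ j ∈ (insert a s).erase i, (1 - p j)
        = (1 - p a) * ((q i - p i) * ∏ j ∈ s.erase i, (1 - p j)) := by
      intro i hi
      have hia : i ≠ a := fun h => ha (h ▸ hi)
      have : (insert a s).erase i = insert a (s.erase i) := by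
        rw [Finset.erase_insert_of_ne hia.symm]
      rw [this, Finset.prod_insert (by simp [ha])]
      ring
    rw [Finset.sum_congr rfl hrw, ← Finset.mul_sum]
    have h1pa : (0:ℝ) ≤ 1 - p a := by have := hpq a; have := hq1 a; linarith
    have hqa : 0 ≤ q a - p a := by have := hpq a; linarith
    have hmul := mul_le_mul_of_nonneg_left ih h1pa
    nlinarith [mul_le_mul_of_nonneg_left hQP hqa]

theorem stmt5 (n : ℕ) (c : Fin n → ℝ → ℝ) (f : Fin n → Finset (Fin n) → ℝ)
    (p : Fin n → ℝ)
    (hc_diff : ∀ i, Differentiable ℝ (c i))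
    (hc_diff2 : ∀ i, Differentiable ℝ (deriv (c i)))
    (hconv : ∀ i, StrictConvexOn ℝ (Set.Ico (0:ℝ) 1) (c i))
    (hc0 : ∀ i, deriv (c i) 0 = 0)
    (hf01 : ∀ i S, f i S ∈ Set.Icc (0:ℝ) 1)
    (hFGN : ∀ i S, i ∉ S → f i S = 0)
    (hSGE : ∀ S : Finset (Fin n), S ≠ ∅ → ∑ i ∈ S, f i S = 1)
    (hp : ∀ i, p i ∈ Set.Ioo (0:ℝ) 1)
    (hfoc : ∀ i, deriv (c i) (p i) = EIn p (f i) i) :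
    ¬ ∃ q : Fin n → ℝ, (∀ i, q i ∈ Set.Ico (0:ℝ) 1) ∧ (∀ i, p i ≤ q i) ∧ q ≠ p ∧
      (∑ i, q i * deriv (c i) (q i)) + ∏ i, (1 - q i) ≤ 1 := by
  rintro ⟨q, hq, hpq, hne, hz⟩
  -- strict monotonicity of deriv (c i) on [0,1)
  have hmono : ∀ i, StrictMonoOn (deriv (c i)) (Set.Ico (0:ℝ) 1) := fun i =>
    (hconv i).strictMonoOn_deriv (fun x _ => (hc_diff i) x)
  have hpIco : ∀ i, p i ∈ Set.Ico (0:ℝ) 1 := fun i => ⟨(hp i).1.le, (hp i).2⟩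
  -- z(p) = 1
  have hsum_all : ∀ i, p i * deriv (c i) (p i)
      = ∑ S ∈ (Finset.univ : Finset (Fin n)).powerset, f i S * wgt p S := by
    intro i; rw [hfoc i]; exact pmul_EIn p f hFGN i
  have hzp : (∑ i, p i * deriv (c i) (p i)) + ∏ j, (1 - p j) = 1 := by
    have hswap : ∑ i, p i * deriv (c i) (p i)
        = ∑ S ∈ (Finset.univ : Finset (Fin n)).powerset, (∑ i, f i S) * wgt p S := by
      rw [Finset.sum_congr rfl (fun i _ => hsum_all i), Finset.sum_comm]
      exact Finset.sum_congr rfl fun S _ => by rw [Finset.sum_mul]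
    have hterm : ∀ S ∈ (Finset.univ : Finset (Fin n)).powerset,
        (∑ i, f i S) * wgt p S = wgt p S - (if S = ∅ then wgt p ∅ else 0) := by
      intro S _
      by_cases hS : S = ∅
      · subst hS
        simp [hFGN]
      · have h1 : ∑ i, f i S = 1 := by
          rw [← hSGE S hS]
          exact (Finset.sum_subset (Finset.subset_univ S)
            (fun i _ hi => hFGN i S hi)).symm
        simp [h1, hS]
    rw [hswap, Finset.sum_congr rfl hterm, Finset.sum_sub_distrib, sum_wgt,
      Finset.sum_ite_eq' _ ∅ (fun _ => wgt p ∅)]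
    have : (∅ : Finset (Fin n)) ∈ (Finset.univ : Finset (Fin n)).powerset := by simp
    rw [if_pos this]
    have hw0 : wgt p ∅ = ∏ j, (1 - p j) := by simp [wgt]
    rw [hw0]; ring
  -- A i ≤ deriv (c i) (p i)
  set A : Fin n → ℝ := fun i => ∏ j ∈ Finset.univ.erase i, (1 - p j) with hA_def
  have hA0 : ∀ i, 0 ≤ A i := fun i =>
    Finset.prod_nonneg fun j _ => by have := (hp j).2; linarith
  have hA : ∀ i, A i ≤ deriv (c i) (p i) := by
    intro i
    rw [hfoc i, EIn]
    have hmem : (∅ : Finset (Fin n)) ∈ (Finset.univ.erase i).powerset := by simp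
    have hval : f i (insert i ∅) * ((∏ j ∈ (∅ : Finset (Fin n)), p j)
        * ∏ j ∈ (Finset.univ.erase i) \ ∅, (1 - p j)) = A i := by
      have hfi : f i {i} = 1 := by
        have := hSGE {i} (by simp)
        simpa using this
      simp [hfi, hA_def]
    calc A i = _ := hval.symm
      _ ≤ _ := by
        apply Finset.single_le_sum (f := fun T => f i (insert i T)
          * ((∏ j ∈ T, p j) * ∏ j ∈ (Finset.univ.erase i) \ T, (1 - p j))) _ hmem
        intro T _
        apply mul_nonneg (hf01 i _).1
        apply mul_nonneg
        · exact Finset.prod_nonneg fun j _ => (hp j).1.le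
        · exact Finset.prod_nonneg fun j _ => by have := (hp j).2; linarith
  -- strict coordinate
  obtain ⟨k, hk⟩ := Function.ne_iff.mp hne
  have hk' : p k < q k := lt_of_le_of_ne (hpq k) (Ne.symm hk)
  -- per-coordinate inequality
  have hterm : ∀ i ∈ (Finset.univ : Finset (Fin n)),
      (q i - p i) * A i ≤ q i * deriv (c i) (q i) - p i * deriv (c i) (p i) := by
    intro i _
    have hd : deriv (c i) (p i) ≤ deriv (c i) (q i) := by
      rcases eq_or_lt_of_le (hpq i) with h | h
      · rw [h]
      · exact (hmono i (hpIco i) (hq i) h).le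
    have h1 : (q i - p i) * A i ≤ (q i - p i) * deriv (c i) (p i) :=
      mul_le_mul_of_nonneg_left (hA i) (by have := hpq i; linarith)
    nlinarith [mul_le_mul_of_nonneg_left hd (show (0:ℝ) ≤ q i - p i by linarith [hpq i]),
      mul_nonneg (hp i).1.le (sub_nonneg.mpr hd)]
  have hstrict : (q k - p k) * A k < q k * deriv (c k) (q k) - p k * deriv (c k) (p k) := by
    have hd : deriv (c k) (p k) < deriv (c k) (q k) := hmono k (hpIco k) (hq k) hk'
    have h1 : (q k - p k) * A k ≤ (q k - p k) * deriv (c k) (p k) :=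
      mul_le_mul_of_nonneg_left (hA k) (by have := hpq k; linarith)
    nlinarith [mul_le_mul_of_nonneg_left hd.le (show (0:ℝ) ≤ q k - p k by linarith),
      mul_pos (hp k).1 (sub_pos.mpr hd)]
  have hsum_lt : ∑ i, (q i - p i) * A i
      < ∑ i, (q i * deriv (c i) (q i) - p i * deriv (c i) (p i)) :=
    Finset.sum_lt_sum hterm ⟨k, Finset.mem_univ k, hstrict⟩
  have hprod : (∏ j, (1 - p j)) - (∏ j, (1 - q j)) ≤ ∑ i, (q i - p i) * A i := by
    have := prod_sub_le p q (fun i => (hp i).1.le) hpq (fun i => (hq i).2.le) Finset.univ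
    simpa [hA_def] using this
  rw [Finset.sum_sub_distrib] at hsum_lt
  linarith
end

section
/- For C_1, C_2 > 1, the ratio R(λ) = p_2'(λ)/p_1'(λ) = (−C_1C_2 − C_1(2λ−1) + λ²)/(C_1C_2 − C_2(2λ−1) − (1−λ)²) is strictly decreasing in λ on (0,1). -/
/-!
Both `p₁` and `p₂` have the denominator `g(λ) = C₁C₂ − λ(1 − λ)`, so in the quotient of their
derivatives (quotient rule) the factor `g(λ)²` cancels and only the numerators `N(λ) / D(λ)` remain.
For `a < b` in `(0, 1)` one has the factorisation
`N(a) D(b) − N(b) D(a) = (C₁ + C₂ − 1)(b − a)(2C₁C₂ + 2ab − a − b)`,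
whose factors are all positive, and `D > 0` on `(0, 1)`.
-/

open Set

theorem deriv_div_div_deriv_div_of_hasDerivAt {𝕜 : Type*} [NontriviallyNormedField 𝕜]
    {f₁ f₂ g : 𝕜 → 𝕜} {f₁' f₂' g' x : 𝕜} (h₁ : HasDerivAt f₁ f₁' x) (h₂ : HasDerivAt f₂ f₂' x)
    (hg : HasDerivAt g g' x) (hgx : g x ≠ 0) :
    deriv (fun y => f₁ y / g y) x / deriv (fun y => f₂ y / g y) x =
      (f₁' * g x - f₁ x * g') / (f₂' * g x - f₂ x * g') := by
  rw [(h₁.fun_div hg hgx).deriv, (h₂.fun_div hg hgx).deriv,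
    div_div_div_cancel_right₀ (pow_ne_zero 2 hgx)]

namespace DerivRatio

variable {C₁ C₂ : ℝ}

def num (C₁ C₂ l : ℝ) : ℝ := -(C₁ * C₂) - C₁ * (2 * l - 1) + l ^ 2

def den (C₁ C₂ l : ℝ) : ℝ := C₁ * C₂ - C₂ * (2 * l - 1) - (1 - l) ^ 2

theorem den_pos (hC₁ : 1 < C₁) (hC₂ : 1 < C₂) {l : ℝ} (hl : l ∈ Ioo (0 : ℝ) 1) :
    0 < den C₁ C₂ l := by
  obtain ⟨hl₀, hl₁⟩ := hl
  have hD : den C₁ C₂ l = C₂ * (C₁ - 1) + (1 - l) * (2 * C₂ - 1 + l) := by unfold den; ring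
  rw [hD]
  exact add_pos (mul_pos (by linarith) (by linarith)) (mul_pos (by linarith) (by linarith))

theorem num_mul_den_sub_num_mul_den (a b : ℝ) :
    num C₁ C₂ a * den C₁ C₂ b - num C₁ C₂ b * den C₁ C₂ a =
      (C₁ + C₂ - 1) * (b - a) * (2 * C₁ * C₂ + 2 * a * b - a - b) := by
  unfold num den; ring

theorem strictAntiOn_num_div_den (hC₁ : 1 < C₁) (hC₂ : 1 < C₂) :
    StrictAntiOn (fun l => num C₁ C₂ l / den C₁ C₂ l) (Ioo 0 1) := by
  intro a ha b hb hab
  rw [div_lt_div_iff₀ (den_pos hC₁ hC₂ hb) (den_pos hC₁ hC₂ ha), ← sub_pos,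
    num_mul_den_sub_num_mul_den]
  have hC : 1 < C₁ * C₂ := one_lt_mul_of_lt_of_le hC₁ hC₂.le
  have hab_pos : 0 < a * b := mul_pos ha.1 hb.1
  have : 0 < 2 * C₁ * C₂ + 2 * a * b - a - b := by linarith [ha.2, hb.2]
  exact mul_pos (mul_pos (by linarith) (sub_pos.2 hab)) this

theorem deriv_div_deriv_eq_num_div_den {l : ℝ} (hg : C₁ * C₂ - l * (1 - l) ≠ 0) :
    deriv (fun l => (C₁ - l) / (C₁ * C₂ - l * (1 - l))) l /
        deriv (fun l => (C₂ - (1 - l)) / (C₁ * C₂ - l * (1 - l))) l =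
      num C₁ C₂ l / den C₁ C₂ l := by
  have hg' : HasDerivAt (fun l : ℝ => C₁ * C₂ - l * (1 - l)) (2 * l - 1) l :=
    (((hasDerivAt_id' l).fun_mul ((hasDerivAt_id' l).const_sub 1)).const_sub (C₁ * C₂)).congr_deriv
      (by ring)
  have h₁ : HasDerivAt (fun l : ℝ => C₁ - l) (-1) l := (hasDerivAt_id l).const_sub C₁
  have h₂ : HasDerivAt (fun l : ℝ => C₂ - (1 - l)) 1 l := by
    simpa using ((hasDerivAt_id l).const_sub 1).const_sub C₂
  rw [deriv_div_div_deriv_div_of_hasDerivAt h₁ h₂ hg' hg]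
  unfold num den
  congr 1 <;> ring

end DerivRatio

open DerivRatio in
theorem stmt8 (C1 C2 : ℝ) (hC1 : 1 < C1) (hC2 : 1 < C2) :
    (∀ lam ∈ Set.Ioo (0:ℝ) 1,
      deriv (fun l => (C1 - l) / (C1 * C2 - l * (1 - l))) lam /
        deriv (fun l => (C2 - (1 - l)) / (C1 * C2 - l * (1 - l))) lam =
      (-(C1 * C2) - C1 * (2 * lam - 1) + lam ^ 2) /
        (C1 * C2 - C2 * (2 * lam - 1) - (1 - lam) ^ 2)) ∧
    StrictAntiOn (fun lam => (-(C1 * C2) - C1 * (2 * lam - 1) + lam ^ 2) /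
        (C1 * C2 - C2 * (2 * lam - 1) - (1 - lam) ^ 2)) (Set.Ioo (0:ℝ) 1) := by
  refine ⟨fun lam hlam => deriv_div_deriv_eq_num_div_den ?_, strictAntiOn_num_div_den hC1 hC2⟩
  have : lam * (1 - lam) < 1 := by nlinarith [hlam.1, hlam.2]
  nlinarith [one_lt_mul_of_lt_of_le hC1 hC2.le]
end

section
/- For any C_1, C_2 > 1, at λ = 1/2 we have p_2'(1/2)/p_1'(1/2) = −1; that is, the marginal rate of substitution between the two agents' equilibrium success probabilities equals −1 at the equal split, independent of the cost parameters. -/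
/-! The common denominator `C₁C₂ − λ(1 − λ)` is stationary at `λ = 1/2`, so there `p₁'` and `p₂'`
are the derivatives `1` and `−1` of the numerators divided by the same nonzero number. -/

theorem HasDerivAt.div_of_hasDerivAt_zero {𝕜 𝕜' : Type*} [NontriviallyNormedField 𝕜]
    [NontriviallyNormedField 𝕜'] [NormedAlgebra 𝕜 𝕜'] {c d : 𝕜 → 𝕜'} {c' : 𝕜'} {x : 𝕜}
    (hc : HasDerivAt c c' x) (hd : HasDerivAt d 0 x) (hx : d x ≠ 0) :
    HasDerivAt (fun y => c y / d y) (c' / d x) x := by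
  simpa [sq, mul_div_mul_right _ _ hx] using hc.fun_div hd hx

theorem hasDerivAt_const_sub_mul_one_sub_half (a : ℝ) :
    HasDerivAt (fun l : ℝ => a - l * (1 - l)) 0 (1 / 2) :=
  (((hasDerivAt_id' _).fun_mul ((hasDerivAt_id' _).const_sub 1)).const_sub a).congr_deriv
    (by norm_num)

theorem stmt9 (C1 C2 : ℝ) (hC1 : 1 < C1) (hC2 : 1 < C2) :
    deriv (fun l => (C1 - l) / (C1 * C2 - l * (1 - l))) (1 / 2) /
      deriv (fun l => (C2 - (1 - l)) / (C1 * C2 - l * (1 - l))) (1 / 2) = -1 := by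
  have hden := hasDerivAt_const_sub_mul_one_sub_half (C1 * C2)
  have hD : C1 * C2 - 1 / 2 * (1 - 1 / 2) ≠ 0 := by nlinarith
  have hp2 := ((hasDerivAt_id' _).const_sub C1).div_of_hasDerivAt_zero hden hD
  have hp1 := (((hasDerivAt_id' _).const_sub 1).const_sub C2).div_of_hasDerivAt_zero hden hD
  rw [hp2.deriv, hp1.deriv, neg_neg, neg_div, neg_div, div_self (one_div_ne_zero hD)]
end

section
/- For C_1, C_2 > 1 and w ≤ (C_1C_2 − C_1)/(C_1C_2 + C_2 − 1), the function λ ↦ w·p_1(λ) + p_2(λ) is maximized on [0,1] at λ = 0; for w ≥ (C_1C_2 + C_1 − 1)/(C_1C_2 − C_2), it is maximized at λ = 1; and for w = 1, it is maximized at λ = 1/2. -/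
/-- Equilibrium success probability of agent 1 under the SGE contract with split `l`. -/
noncomputable def P1 (C1 C2 l : ℝ) : ℝ := (C2 - (1 - l)) / (C1 * C2 - l * (1 - l))

/-- Equilibrium success probability of agent 2 under the SGE contract with split `l`. -/
noncomputable def P2 (C1 C2 l : ℝ) : ℝ := (C1 - l) / (C1 * C2 - l * (1 - l))


/-!
Writing `D(λ) = C₁C₂ - λ(1 - λ)`, the objective is `(w (C₂ - 1 + λ) + C₁ - λ) / D(λ)`.
Comparing it with its value at `λ = 0` and clearing the positive denominators leaves
`λ ((w (C₂ - 1) + C₁) λ + (C₁C₂ - C₁ - w (C₁C₂ + C₂ - 1))) ≥ 0`, which is exactly where the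
bound on `w` comes from. The case `λ = 1` is the same statement after exchanging the two agents
(`C₁ ↔ C₂`, `λ ↔ 1 - λ`) and rescaling the objective by `w⁻¹`. For `w = 1` the numerator is the
constant `C₁ + C₂ - 1`, so the objective is largest where `D` is smallest, at `λ = 1/2`.
-/

open Set

lemma P1_eq_P2_swap (C1 C2 l : ℝ) : P1 C1 C2 l = P2 C2 C1 (1 - l) := by
  simp only [P1, P2]
  ring_nf

lemma P2_eq_P1_swap (C1 C2 l : ℝ) : P2 C1 C2 l = P1 C2 C1 (1 - l) := by
  simp only [P1, P2]
  ring_nf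

lemma denom_pos {C1 C2 : ℝ} (h : 1 / 4 < C1 * C2) (l : ℝ) : 0 < C1 * C2 - l * (1 - l) := by
  nlinarith [sq_nonneg (l - 1 / 2)]

lemma mul_P1_add_P2 (w C1 C2 l : ℝ) :
    w * P1 C1 C2 l + P2 C1 C2 l = (w * (C2 - 1 + l) + C1 - l) / (C1 * C2 - l * (1 - l)) := by
  simp only [P1, P2]
  ring

lemma mul_P1_add_P2_le_at_zero {C1 C2 w l : ℝ} (hC1 : 1 < C1) (hC2 : 1 < C2) (hw : 0 ≤ w)
    (hwle : w ≤ (C1 * C2 - C1) / (C1 * C2 + C2 - 1)) (hl : l ∈ Icc (0 : ℝ) 1) :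
    w * P1 C1 C2 l + P2 C1 C2 l ≤ w * P1 C1 C2 0 + P2 C1 C2 0 := by
  have hCC : 1 / 4 < C1 * C2 := by nlinarith
  have hK : w * (C1 * C2 + C2 - 1) ≤ C1 * C2 - C1 := (le_div_iff₀ (by nlinarith)).mp hwle
  have hN : 0 ≤ w * (C2 - 1) + C1 := by nlinarith
  rw [mul_P1_add_P2, mul_P1_add_P2, div_le_div_iff₀ (denom_pos hCC l) (denom_pos hCC 0)]
  nlinarith [mul_nonneg hl.1 (add_nonneg (mul_nonneg hN hl.1) (sub_nonneg.2 hK))]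

lemma mul_P1_add_P2_le_at_one {C1 C2 w l : ℝ} (hC1 : 1 < C1) (hC2 : 1 < C2) (hw : 0 < w)
    (hwge : (C1 * C2 + C1 - 1) / (C1 * C2 - C2) ≤ w) (hl : l ∈ Icc (0 : ℝ) 1) :
    w * P1 C1 C2 l + P2 C1 C2 l ≤ w * P1 C1 C2 1 + P2 C1 C2 1 := by
  have hswap : ∀ x, w * P1 C1 C2 x + P2 C1 C2 x
      = w * (w⁻¹ * P1 C2 C1 (1 - x) + P2 C2 C1 (1 - x)) := fun x => by
    rw [P1_eq_P2_swap C1 C2 x, P2_eq_P1_swap C1 C2 x, mul_add, mul_inv_cancel_left₀ hw.ne']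
    ring
  have hwinv : w⁻¹ ≤ (C2 * C1 - C2) / (C2 * C1 + C1 - 1) := by
    have := inv_anti₀ (div_pos (by nlinarith) (by nlinarith)) hwge
    rwa [inv_div, mul_comm C1 C2] at this
  have hl' : 1 - l ∈ Icc (0 : ℝ) 1 := ⟨by linarith [hl.2], by linarith [hl.1]⟩
  rw [hswap, hswap, sub_self]
  exact mul_le_mul_of_nonneg_left
    (mul_P1_add_P2_le_at_zero hC2 hC1 (inv_nonneg.2 hw.le) hwinv hl') hw.le

lemma P1_add_P2_le_at_half {C1 C2 : ℝ} (hC1 : 1 < C1) (hC2 : 1 < C2) (l : ℝ) :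
    P1 C1 C2 l + P2 C1 C2 l ≤ P1 C1 C2 (1 / 2) + P2 C1 C2 (1 / 2) := by
  have hCC : 1 / 4 < C1 * C2 := by nlinarith
  have hsum : ∀ x, P1 C1 C2 x + P2 C1 C2 x = (C1 + C2 - 1) / (C1 * C2 - x * (1 - x)) :=
    fun x => by rw [← one_mul (P1 C1 C2 x), mul_P1_add_P2]; ring_nf
  rw [hsum, hsum]
  exact div_le_div_of_nonneg_left (by linarith) (denom_pos hCC _)
    (by nlinarith [sq_nonneg (l - 1 / 2)])

theorem stmt10 (C1 C2 w : ℝ) (hC1 : 1 < C1) (hC2 : 1 < C2) (hw : 0 < w) :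
    (w ≤ (C1 * C2 - C1) / (C1 * C2 + C2 - 1) →
      ∀ lam ∈ Set.Icc (0:ℝ) 1,
        w * P1 C1 C2 lam + P2 C1 C2 lam ≤ w * P1 C1 C2 0 + P2 C1 C2 0) ∧
    ((C1 * C2 + C1 - 1) / (C1 * C2 - C2) ≤ w →
      ∀ lam ∈ Set.Icc (0:ℝ) 1,
        w * P1 C1 C2 lam + P2 C1 C2 lam ≤ w * P1 C1 C2 1 + P2 C1 C2 1) ∧
    (w = 1 →
      ∀ lam ∈ Set.Icc (0:ℝ) 1,
        w * P1 C1 C2 lam + P2 C1 C2 lam ≤ w * P1 C1 C2 (1 / 2) + P2 C1 C2 (1 / 2)) := by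
  refine ⟨fun hwle lam hl => mul_P1_add_P2_le_at_zero hC1 hC2 hw.le hwle hl,
    fun hwge lam hl => mul_P1_add_P2_le_at_one hC1 hC2 hw hwge hl, ?_⟩
  rintro rfl lam -
  simpa only [one_mul] using P1_add_P2_le_at_half hC1 hC2 lam
end

section
/- Let f be a contract with equilibrium p, meaning that for each i, either p_i > 0 and c_i'(p_i) = r_i(f,p), or p_i = 0, where r_i(f,p) = E_p[f_i(S)|i∈S] − E_p[f_i(S)|i∉S] ≤ E_p[f_i(S)|i∈S]. Define g by g_i(S) = λ_i·f_i(S) for i ∈ S and 0 otherwise, where λ_i = r_i(f,p)/E_p[f_i(S)|i∈S] if p_i > 0 and λ_i = 0 if p_i = 0. Then g is an FGN contract (in particular 0 ≤ λ_i ≤ 1 and Σ_{i∈S} g_i(S) ≤ 1), and p is an equilibrium of g: for each i, c_i'(p_i) = E_p[g_i(S)|i∈S] if p_i > 0, and E_p[g_i(S)|i∈S] = 0 if p_i = 0. -/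
open Finset

/-- Expected reward of agent `i` conditional on `i` failing. -/
noncomputable def EOut {n : ℕ} (p : Fin n → ℝ) (f : Finset (Fin n) → ℝ) (i : Fin n) : ℝ :=
  ∑ T ∈ (Finset.univ.erase i).powerset,
    f T * ((∏ j ∈ T, p j) * ∏ j ∈ (Finset.univ.erase i) \ T, (1 - p j))

lemma EIn_smul {n : ℕ} (p : Fin n → ℝ) (f : Finset (Fin n) → ℝ) (i : Fin n) (l : ℝ)
    (g : Finset (Fin n) → ℝ) (hg : ∀ S, i ∈ S → g S = l * f S) :
    EIn p g i = l * EIn p f i := by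
  unfold EIn
  rw [Finset.mul_sum]
  apply Finset.sum_congr rfl
  intro T _
  rw [hg _ (mem_insert_self i T)]
  ring

theorem stmt11 (n : ℕ) (c : Fin n → ℝ → ℝ) (f : Fin n → Finset (Fin n) → ℝ)
    (p : Fin n → ℝ)
    (hf01 : ∀ i S, f i S ∈ Set.Icc (0:ℝ) 1)
    (hbudget : ∀ S : Finset (Fin n), ∑ i ∈ S, f i S ≤ 1)
    (hp : ∀ i, p i ∈ Set.Icc (0:ℝ) 1)
    (heq : ∀ i, (0 < p i ∧ deriv (c i) (p i) = EIn p (f i) i - EOut p (f i) i) ∨ p i = 0)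
    (hpos : ∀ i, 0 < p i → 0 < EIn p (f i) i)
    (hr : ∀ i, 0 < p i → 0 ≤ EIn p (f i) i - EOut p (f i) i) :
    let lam : Fin n → ℝ := fun i =>
      if 0 < p i then (EIn p (f i) i - EOut p (f i) i) / EIn p (f i) i else 0
    let g : Fin n → Finset (Fin n) → ℝ := fun i S => if i ∈ S then lam i * f i S else 0
    (∀ i S, i ∉ S → g i S = 0) ∧
    (∀ i, 0 ≤ lam i ∧ lam i ≤ 1) ∧
    (∀ S : Finset (Fin n), ∑ i ∈ S, g i S ≤ 1) ∧
    (∀ i, 0 < p i → deriv (c i) (p i) = EIn p (g i) i) ∧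
    (∀ i, p i = 0 → EIn p (g i) i = 0) := by
  intro lam g
  have hEOut : ∀ i, 0 ≤ EOut p (f i) i := by
    intro i
    apply Finset.sum_nonneg
    intro T _
    apply mul_nonneg (hf01 i T).1
    apply mul_nonneg
    · exact Finset.prod_nonneg fun j _ => (hp j).1
    · exact Finset.prod_nonneg fun j _ => by linarith [(hp j).2]
  have hlam : ∀ i, 0 ≤ lam i ∧ lam i ≤ 1 := by
    intro i
    simp only [lam]
    split_ifs with h
    · constructor
      · exact div_nonneg (hr i h) (hpos i h).le
      · rw [div_le_one (hpos i h)]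
        linarith [hEOut i]
    · simp
  have hEg : ∀ i, EIn p (g i) i = lam i * EIn p (f i) i := by
    intro i
    apply EIn_smul
    intro S hS
    simp [g, hS]
  refine ⟨fun i S h => by simp [g, h], hlam, ?_, ?_, ?_⟩
  · intro S
    calc ∑ i ∈ S, g i S ≤ ∑ i ∈ S, f i S := by
          apply Finset.sum_le_sum
          intro i hi
          simp only [g, if_pos hi]
          calc lam i * f i S ≤ 1 * f i S :=
                mul_le_mul_of_nonneg_right (hlam i).2 (hf01 i S).1
            _ = f i S := one_mul _
      _ ≤ 1 := hbudget S
  · intro i hpi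
    rcases heq i with ⟨_, hd⟩ | h0
    · rw [hEg i, hd]
      simp only [lam, if_pos hpi]
      rw [div_mul_eq_mul_div, mul_div_assoc, div_self (hpos i hpi).ne', mul_one]
    · exact absurd h0 hpi.ne'
  · intro i h0
    rw [hEg i]
    simp [lam, h0]
end

section
/- In the two-agent piece-winner game with p_i(β_1,β_2) = β_i(C_{−i} − β_{−i})/(C_1C_2 − β_1β_2) where C_1, C_2 > 1 and β_1, β_2 ∈ [0,1], p_1 is strictly increasing in β_1 while p_2 is nonincreasing in β_1 (strictly decreasing when β_2 > 0). -/
theorem stmt14 (C1 C2 b2 : ℝ) (hC1 : 1 < C1) (hC2 : 1 < C2)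
    (hb2 : b2 ∈ Set.Icc (0:ℝ) 1) :
    StrictMonoOn (fun b1 => b1 * (C2 - b2) / (C1 * C2 - b1 * b2)) (Set.Icc (0:ℝ) 1) ∧
    AntitoneOn (fun b1 => b2 * (C1 - b1) / (C1 * C2 - b1 * b2)) (Set.Icc (0:ℝ) 1) ∧
    (0 < b2 →
      StrictAntiOn (fun b1 => b2 * (C1 - b1) / (C1 * C2 - b1 * b2)) (Set.Icc (0:ℝ) 1)) := by
  obtain ⟨hb0, hb1⟩ := hb2
  have hD : ∀ x : ℝ, x ∈ Set.Icc (0:ℝ) 1 → 0 < C1 * C2 - x * b2 := by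
    intro x ⟨hx0, hx1⟩
    nlinarith [mul_le_one₀ hx1 hb0 hb1]
  refine ⟨?_, ?_, ?_⟩
  · intro x hx y hy hxy
    have hdx := hD x hx
    have hdy := hD y hy
    simp only
    rw [div_lt_div_iff₀ hdx hdy]
    nlinarith [mul_pos (mul_pos (show (0:ℝ) < C2 - b2 by linarith) (show (0:ℝ) < C1 * C2 by nlinarith)) (sub_pos.mpr hxy)]
  · intro x hx y hy hxy
    have hdx := hD x hx
    have hdy := hD y hy
    simp only
    rw [div_le_div_iff₀ hdy hdx]
    nlinarith [mul_nonneg (mul_nonneg (mul_nonneg hb0 (sub_nonneg.mpr hxy)) (show (0:ℝ) ≤ C1 by linarith)) (show (0:ℝ) ≤ C2 - b2 by linarith)]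
  · intro hb2pos x hx y hy hxy
    have hdx := hD x hx
    have hdy := hD y hy
    simp only
    rw [div_lt_div_iff₀ hdy hdx]
    nlinarith [mul_pos (mul_pos (mul_pos hb2pos (sub_pos.mpr hxy)) (show (0:ℝ) < C1 by linarith)) (show (0:ℝ) < C2 - b2 by linarith)]
end
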